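/- Transport term for θ (remark after Proposition 2): when the parameter of interest is θ := Σ_{g=0}^{g_max} P(G=g|S=1) · E[τ(g)|S=1], the transport term T₃ becomes φ₁ − θ = Σ_{g=0}^{g_max} Cov( τ(g), π(g) ), where π(g) := P(G=g|S=1,𝓗) and the covariance is unconditional. -/

import Mathlib

open MeasureTheory ProbabilityTheory Set

/-- The indicator function of a set, as a real-valued random variable. -/
noncomputable def ind {Ω : Type*} (s : Set Ω) : Ω → ℝ := s.indicator fun _ => 1

/-- The covariance of two real random variables, `Cov(f,g) = E[f·g] − E[f]·E[g]`. -/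
noncomputable def cov {Ω : Type*} {m : MeasurableSpace Ω} (μ : MeasureTheory.Measure Ω)
    (f g : Ω → ℝ) : ℝ :=
  (∫ ω, f ω * g ω ∂μ) - (∫ ω, f ω ∂μ) * ∫ ω, g ω ∂μ

/-! Write `μ₁ = μ[|S = 1]`, `τ = τ(g)` and `π = π(g) = μ₁[1_{G = g} | 𝓗]`. Since `S ⊥ 𝓗`,
`μ₁` and `μ` agree on `𝓗`, which gives `μ[1_{S=1} 1_F | 𝓗] = P(S = 1) · μ₁[1_F | 𝓗]`. Conditional
independence of `τ` and `(S, G)` given `𝓗` factors `μ[1_{(S,G) ∈ B} τ | 𝓗]` as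
`P((S,G) ∈ B | 𝓗) · μ[τ | 𝓗]`. Together these give `E₁[1_{G=g} τ] = E[τ π]`, `E₁[τ] = E[τ]` and
`P₁(G = g) = E[π]`, so the `g`-th summand of `φ₁ − θ` is `Cov(τ, π)`. -/

theorem ind_mul_eq_indicator {Ω : Type*} (s : Set Ω) (f : Ω → ℝ) (ω : Ω) :
    ind s ω * f ω = s.indicator f ω := by
  by_cases hω : ω ∈ s <;> simp [ind, hω]

theorem MeasureTheory.Integrable.cond {Ω : Type*} {mΩ : MeasurableSpace Ω} {μ : Measure Ω}
    {s : Set Ω} {f : Ω → ℝ} (hf : Integrable f μ) (hμs : μ s ≠ 0) : Integrable f μ[|s] :=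
  hf.restrict.smul_measure (ENNReal.inv_ne_top.2 hμs)

theorem integral_cond_eq_inv_mul_setIntegral {Ω : Type*} {mΩ : MeasurableSpace Ω}
    {μ : Measure Ω} {s : Set Ω} (f : Ω → ℝ) :
    ∫ x, f x ∂μ[|s] = (μ.real s)⁻¹ * ∫ x in s, f x ∂μ := by
  rw [ProbabilityTheory.cond, integral_smul_measure, smul_eq_mul, ENNReal.toReal_inv,
    measureReal_def]

section ProductRule

variable {Ω : Type*} {m mΩ : MeasurableSpace Ω} {μ : Measure Ω} [IsFiniteMeasure μ]
  {s : Set Ω} {X : Ω → ℝ}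

theorem integral_indicator_eq_integral_mul_condExp (hm : m ≤ mΩ) (hX : Integrable X μ)
    (hXs : μ[s.indicator X | m] =ᵐ[μ] μ⟦s | m⟧ * μ[X | m]) :
    ∫ ω, s.indicator X ω ∂μ = ∫ ω, X ω * (μ⟦s | m⟧) ω ∂μ := by
  have hbdd : ∀ᵐ ω ∂μ, ‖(μ⟦s | m⟧) ω‖ ≤ 1 := by
    refine ae_bdd_abs_condExp_of_ae_bdd_abs (ae_of_all _ fun ω => ?_)
    by_cases hω : ω ∈ s <;> simp [hω]
  have hint : Integrable (μ⟦s | m⟧ * X) μ :=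
    hX.bdd_mul (stronglyMeasurable_condExp.mono hm).aestronglyMeasurable hbdd
  calc ∫ ω, s.indicator X ω ∂μ = ∫ ω, (μ[s.indicator X | m]) ω ∂μ := (integral_condExp hm).symm
    _ = ∫ ω, (μ⟦s | m⟧ * μ[X | m]) ω ∂μ := integral_congr_ae hXs
    _ = ∫ ω, (μ[μ⟦s | m⟧ * X | m]) ω ∂μ := integral_congr_ae
        (condExp_mul_of_stronglyMeasurable_left stronglyMeasurable_condExp hint hX).symm
    _ = ∫ ω, X ω * (μ⟦s | m⟧) ω ∂μ := by
        rw [integral_condExp hm]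
        exact integral_congr_ae (ae_of_all _ fun ω => mul_comm _ _)

variable [StandardBorelSpace Ω] {hm : m ≤ mΩ}

/-- Pointwise, the conditional law given `m` makes `X` and `Z` independent, so the integral of
`1_{Z ∈ B} X` against it factors. -/
theorem condExp_indicator_ae_eq_condExp_mul_condExp_of_condIndepFun {β : Type*}
    [MeasurableSpace β] [MeasurableSpace.CountablyGenerated β] {Z : Ω → β}
    (hX : Measurable X) (hXi : Integrable X μ) (hZ : Measurable Z)
    (hXZ : CondIndepFun m hm X Z μ) {B : Set β} (hB : MeasurableSet B) :
    μ[(Z ⁻¹' B).indicator X | m] =ᵐ[μ] μ⟦Z ⁻¹' B | m⟧ * μ[X | m] := by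
  set κ := condExpKernel μ m
  have hindep : ∀ᵐ ω ∂μ, IndepFun X Z (κ ω) := by
    filter_upwards [ae_of_ae_trim hm
      ((condIndepFun_iff_map_prod_eq_prod_map_map hX hZ).1 hXZ)] with ω hω
    rw [indepFun_iff_map_prod_eq_prod_map_map hX.aemeasurable hZ.aemeasurable]
    simpa [Kernel.map_apply _ hX, Kernel.map_apply _ hZ, Kernel.map_apply _ (hX.prodMk hZ),
      Kernel.prod_apply] using hω
  have hfactor : ∀ᵐ ω ∂μ, ∫ y, (Z ⁻¹' B).indicator X y ∂(κ ω)
      = (κ ω).real (Z ⁻¹' B) * ∫ y, X y ∂(κ ω) := by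
    filter_upwards [hindep] with ω hω
    have hB1 : Measurable (B.indicator (1 : β → ℝ)) := measurable_one.indicator hB
    have hcomp : B.indicator 1 ∘ Z = (Z ⁻¹' B).indicator (1 : Ω → ℝ) := by
      ext y; by_cases hy : Z y ∈ B <;> simp [hy]
    have hprod : (Z ⁻¹' B).indicator X = X * B.indicator 1 ∘ Z := by
      ext y; by_cases hy : Z y ∈ B <;> simp [hy]
    rw [hprod, mul_comm _ (∫ y, X y ∂(κ ω)), ← integral_indicator_one (hZ hB), ← hcomp]
    exact (hω.comp measurable_id hB1).integral_mul_eq_mul_integral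
      hX.aestronglyMeasurable (hB1.comp hZ).aestronglyMeasurable
  filter_upwards [condExp_ae_eq_integral_condExpKernel hm (hXi.indicator (hZ hB)),
    condExp_ae_eq_integral_condExpKernel hm hXi, condExpKernel_ae_eq_condExp hm (hZ hB),
    hfactor] with ω h₁ h₂ h₃ h₄
  rw [Pi.mul_apply, h₁, h₄, h₂, ← h₃]

theorem condExp_indicator_sub_ae_eq_condExp_mul_condExp_of_condIndepFun {β : Type*}
    [MeasurableSpace β] [MeasurableSpace.CountablyGenerated β] {Y : Ω → ℝ} {Z : Ω → β}
    (hX : Measurable X) (hXi : Integrable X μ) (hY : Measurable Y) (hYi : Integrable Y μ)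
    (hZ : Measurable Z) (hXZ : CondIndepFun m hm X Z μ) (hYZ : CondIndepFun m hm Y Z μ)
    {B : Set β} (hB : MeasurableSet B) :
    μ[(Z ⁻¹' B).indicator (X - Y) | m] =ᵐ[μ] μ⟦Z ⁻¹' B | m⟧ * μ[X - Y | m] := by
  rw [indicator_sub']
  filter_upwards [condExp_sub (hXi.indicator (hZ hB)) (hYi.indicator (hZ hB)) m,
    condExp_sub hXi hYi m,
    condExp_indicator_ae_eq_condExp_mul_condExp_of_condIndepFun hX hXi hZ hXZ hB,
    condExp_indicator_ae_eq_condExp_mul_condExp_of_condIndepFun hY hYi hZ hYZ hB]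
    with ω h₁ h₂ h₃ h₄
  simp only [Pi.sub_apply, Pi.mul_apply] at *
  rw [h₁, h₂, h₃, h₄, mul_sub]

end ProductRule

section IndependentConditioning

variable {Ω : Type*} {m₁ m mΩ : MeasurableSpace Ω} {μ : Measure Ω} [IsFiniteMeasure μ]
  {s : Set Ω}

theorem cond_apply_of_indep (hind : Indep m₁ m μ) (hs : MeasurableSet[m₁] s) (hμs : μ s ≠ 0)
    (hm : m ≤ mΩ) {t : Set Ω} (ht : MeasurableSet[m] t) : μ[t | s] = μ t := by
  rw [cond_apply' (hm t ht), (Indep_iff _ _ _).1 hind s t hs ht, ← mul_assoc,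
    ENNReal.inv_mul_cancel hμs (measure_ne_top μ s), one_mul]

theorem trim_cond_eq_trim_of_indep (hind : Indep m₁ m μ) (hs : MeasurableSet[m₁] s)
    (hμs : μ s ≠ 0) (hm : m ≤ mΩ) : (μ[|s]).trim hm = μ.trim hm := by
  refine @Measure.ext Ω m _ _ fun t ht => ?_
  rw [trim_measurableSet_eq hm ht, trim_measurableSet_eq hm ht,
    cond_apply_of_indep hind hs hμs hm ht]

theorem integral_cond_of_indep (hind : Indep m₁ m μ) (hs : MeasurableSet[m₁] s)
    (hμs : μ s ≠ 0) (hm : m ≤ mΩ) {f : Ω → ℝ} (hf : StronglyMeasurable[m] f) :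
    ∫ x, f x ∂μ[|s] = ∫ x, f x ∂μ :=
  calc ∫ x, f x ∂μ[|s] = ∫ x, f x ∂(μ[|s]).trim hm := integral_trim hm hf
    _ = ∫ x, f x ∂μ.trim hm := by rw [trim_cond_eq_trim_of_indep hind hs hμs hm]
    _ = ∫ x, f x ∂μ := (integral_trim hm hf).symm

theorem integrable_of_integrable_cond_of_indep (hind : Indep m₁ m μ)
    (hs : MeasurableSet[m₁] s) (hμs : μ s ≠ 0) (hm : m ≤ mΩ) {f : Ω → ℝ}
    (hf : StronglyMeasurable[m] f) (hfs : Integrable f μ[|s]) : Integrable f μ := by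
  refine integrable_of_integrable_trim hm ?_
  rw [← trim_cond_eq_trim_of_indep hind hs hμs hm]
  exact hfs.trim hm hf

theorem condExp_indicator_ae_eq_smul_condExp_cond (hind : Indep m₁ m μ)
    (hs₁ : MeasurableSet[m₁] s) (hs : MeasurableSet s) (hμs : μ s ≠ 0) (hm : m ≤ mΩ)
    {f : Ω → ℝ} (hf : Integrable f μ) :
    μ[s.indicator f | m] =ᵐ[μ] μ.real s • (μ[|s])[f | m] := by
  have hfs : Integrable f μ[|s] := hf.cond hμs
  have hπ : Integrable ((μ[|s])[f | m]) μ :=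
    integrable_of_integrable_cond_of_indep hind hs₁ hμs hm stronglyMeasurable_condExp
      integrable_condExp
  refine (ae_eq_condExp_of_forall_setIntegral_eq hm (hf.indicator hs)
    (fun t _ _ => (hπ.smul _).integrableOn) (fun t ht _ => ?_)
    (stronglyMeasurable_condExp.const_smul _).aestronglyMeasurable).symm
  calc ∫ x in t, (μ.real s • (μ[|s])[f | m]) x ∂μ
      = μ.real s * ∫ x, t.indicator ((μ[|s])[f | m]) x ∂μ[|s] := by
        rw [integral_cond_of_indep hind hs₁ hμs hm (stronglyMeasurable_condExp.indicator ht),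
          integral_indicator (hm t ht), Pi.smul_def, integral_smul, smul_eq_mul]
    _ = μ.real s * ∫ x, t.indicator f x ∂μ[|s] := by
        rw [integral_indicator (hm t ht), integral_indicator (hm t ht),
          setIntegral_condExp hm hfs ht]
    _ = ∫ x in t, s.indicator f x ∂μ := by
        rw [integral_cond_eq_inv_mul_setIntegral, ← mul_assoc,
          mul_inv_cancel₀ ((measureReal_ne_zero_iff (measure_ne_top μ s)).2 hμs), one_mul,
          ← integral_indicator hs, ← integral_indicator (hm t ht), indicator_indicator,
          indicator_indicator, inter_comm]

theorem integral_cond_indicator_eq_integral_mul_condExp_cond (hind : Indep m₁ m μ)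
    (hs₁ : MeasurableSet[m₁] s) (hs : MeasurableSet s) (hμs : μ s ≠ 0) (hm : m ≤ mΩ)
    {F : Set Ω} (hF : MeasurableSet F) {X : Ω → ℝ} (hX : Integrable X μ)
    (hXsF : μ[(s ∩ F).indicator X | m] =ᵐ[μ] μ⟦s ∩ F | m⟧ * μ[X | m]) :
    ∫ x, F.indicator X x ∂μ[|s] = ∫ x, X x * ((μ[|s])⟦F | m⟧) x ∂μ := by
  have hπ := condExp_indicator_ae_eq_smul_condExp_cond hind hs₁ hs hμs hm
    ((integrable_const (1 : ℝ)).indicator hF)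
  rw [indicator_indicator] at hπ
  calc ∫ x, F.indicator X x ∂μ[|s] = (μ.real s)⁻¹ * ∫ x, (s ∩ F).indicator X x ∂μ := by
        rw [integral_cond_eq_inv_mul_setIntegral, ← integral_indicator hs, indicator_indicator]
    _ = (μ.real s)⁻¹ * ∫ x, μ.real s * (X x * ((μ[|s])⟦F | m⟧) x) ∂μ := by
        rw [integral_indicator_eq_integral_mul_condExp hm hX hXsF]
        refine congrArg _ (integral_congr_ae (hπ.mono fun x hx => ?_))
        simp only [hx, Pi.smul_apply, smul_eq_mul]
        ring
    _ = ∫ x, X x * ((μ[|s])⟦F | m⟧) x ∂μ := by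
        rw [integral_const_mul, ← mul_assoc,
          inv_mul_cancel₀ ((measureReal_ne_zero_iff (measure_ne_top μ s)).2 hμs), one_mul]

theorem integral_cond_indicator_sub_eq_cov (hind : Indep m₁ m μ)
    (hs₁ : MeasurableSet[m₁] s) (hs : MeasurableSet s) (hμs : μ s ≠ 0) (hm : m ≤ mΩ)
    {F : Set Ω} (hF : MeasurableSet F) {X : Ω → ℝ} (hX : Integrable X μ)
    (hXs : μ[s.indicator X | m] =ᵐ[μ] μ⟦s | m⟧ * μ[X | m])
    (hXsF : μ[(s ∩ F).indicator X | m] =ᵐ[μ] μ⟦s ∩ F | m⟧ * μ[X | m]) :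
    ∫ x, F.indicator X x ∂μ[|s] - (μ[|s]).real F * ∫ x, X x ∂μ[|s]
      = cov μ X ((μ[|s])⟦F | m⟧) := by
  have hX₁ : ∫ x, X x ∂μ[|s] = ∫ x, X x ∂μ := by
    have h := integral_cond_indicator_eq_integral_mul_condExp_cond hind hs₁ hs hμs hm
      MeasurableSet.univ hX (by rwa [inter_univ])
    simpa [condExp_const hm] using h
  have hF₁ : (μ[|s]).real F = ∫ x, ((μ[|s])⟦F | m⟧) x ∂μ := by
    rw [← integral_cond_of_indep hind hs₁ hμs hm stronglyMeasurable_condExp,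
      integral_condExp hm, integral_indicator hF, setIntegral_const, smul_eq_mul, mul_one]
  rw [integral_cond_indicator_eq_integral_mul_condExp_cond hind hs₁ hs hμs hm hF hX hXsF,
    hX₁, hF₁, cov, mul_comm (∫ x, X x ∂μ)]

end IndependentConditioning

theorem transport_term_for_theta_general
    {Ω : Type*} [mΩ : MeasurableSpace Ω] [StandardBorelSpace Ω]
    (μ : Measure Ω) [IsProbabilityMeasure μ]
    (gmax : ℕ)
    (S G : Ω → ℕ)
    (hSmeas : Measurable S)
    (hSpos : ∀ s, (s = 1 ∨ s = 2) → 0 < μ {ω | S ω = s})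
    (hGmeas : Measurable G)
    (Ypo : ℕ → ℕ → Ω → ℝ)
    (hYpomeas : ∀ a ≤ 1, ∀ g ≤ gmax, Measurable (Ypo a g))
    (hYposq : ∀ a ≤ 1, ∀ g ≤ gmax, MemLp (Ypo a g) 2 μ)
    (Ya : ℕ → Ω → ℝ)
    (hYa : ∀ a ω, Ya a ω = ∑ g ∈ Finset.range (gmax + 1), ind {ω' | G ω' = g} ω * Ypo a g ω)
    (mH : MeasurableSpace Ω) (hH : mH ≤ mΩ)
    (pg : ℕ → ℕ → Ω → ℝ)
    (hpg : ∀ s g, pg s g = (μ[|{ω | S ω = s}])[ind {ω | G ω = g} | mH])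
    (htrans : ∀ a ≤ 1, ∀ g ≤ gmax,
      CondIndepFun mH hH (Ypo a g) (fun ω => (S ω, G ω)) μ)
    (hSH : Indep (MeasurableSpace.comap S inferInstance) mH μ)
    (θ : ℝ)
    (hθ : θ = ∑ g ∈ Finset.range (gmax + 1),
        ((μ[|{ω | S ω = 1}]) {ω | G ω = g}).toReal
          * ∫ ω, (Ypo 1 g ω - Ypo 0 g ω) ∂(μ[|{ω | S ω = 1}])) :
    (∫ ω, (Ya 1 ω - Ya 0 ω) ∂(μ[|{ω | S ω = 1}])) - θ
      = ∑ g ∈ Finset.range (gmax + 1),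
          cov μ (fun ω => Ypo 1 g ω - Ypo 0 g ω) (pg 1 g) := by
  -- otherwise the binder `mH`, the most recent one, is the `MeasurableSpace Ω` instance
  let _ : MeasurableSpace Ω := mΩ
  set s := {ω | S ω = 1}
  have hs₁ : MeasurableSet[MeasurableSpace.comap S inferInstance] s :=
    ⟨{1}, measurableSet_singleton 1, rfl⟩
  have hs : MeasurableSet s := hSmeas (measurableSet_singleton 1)
  have hμs : μ s ≠ 0 := (hSpos 1 (Or.inl rfl)).ne'
  have hZ : Measurable fun ω => (S ω, G ω) := hSmeas.prodMk hGmeas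
  have hY (a : ℕ) (ha : a ≤ 1) (g : ℕ) (hg : g ≤ gmax) : Integrable (Ypo a g) μ :=
    (hYposq a ha g hg).integrable one_le_two
  have hτ (g : ℕ) (hg : g ≤ gmax) : Integrable (Ypo 1 g - Ypo 0 g) μ :=
    (hY 1 le_rfl g hg).sub (hY 0 zero_le_one g hg)
  have hprod (g : ℕ) (hg : g ≤ gmax) {B : Set (ℕ × ℕ)} (hB : MeasurableSet B) :=
    condExp_indicator_sub_ae_eq_condExp_mul_condExp_of_condIndepFun (hYpomeas 1 le_rfl g hg)
      (hY 1 le_rfl g hg) (hYpomeas 0 zero_le_one g hg) (hY 0 zero_le_one g hg) hZ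
      (htrans 1 le_rfl g hg) (htrans 0 zero_le_one g hg) hB
  have hsum : ∫ ω, (Ya 1 ω - Ya 0 ω) ∂μ[|s] = ∑ g ∈ Finset.range (gmax + 1),
      ∫ ω, {ω | G ω = g}.indicator (Ypo 1 g - Ypo 0 g) ω ∂μ[|s] := by
    simp_rw [hYa, ← Finset.sum_sub_distrib, ind_mul_eq_indicator, ← Pi.sub_apply,
      ← indicator_sub']
    exact integral_finsetSum _ fun g hg => ((hτ g (Finset.mem_range_succ_iff.1 hg)).indicator
      (hGmeas (measurableSet_singleton g))).cond hμs
  rw [hsum, hθ, ← Finset.sum_sub_distrib]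
  refine Finset.sum_congr rfl fun g hg => ?_
  have hg : g ≤ gmax := Finset.mem_range_succ_iff.1 hg
  have hXs := hprod g hg ((measurableSet_singleton 1).prod MeasurableSet.univ)
  have hXsF := hprod g hg ((measurableSet_singleton 1).prod (measurableSet_singleton g))
  rw [mk_preimage_prod, preimage_univ, inter_univ] at hXs
  rw [mk_preimage_prod] at hXsF
  rw [hpg 1 g]
  exact integral_cond_indicator_sub_eq_cov hSH hs₁ hs hμs hH (hGmeas (measurableSet_singleton g))
    (hτ g hg) hXs hXsF

/-- **Transport term for θ (remark after Proposition 2).**  When the parameter of interest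
is `θ = Σ_g P(G=g|S=1)·E[τ(g)|S=1]`, under the transportability assumptions the transport
term `T₃` becomes `φ₁ − θ = Σ_g Cov(τ(g), π(g))`, where `π(g) = P(G=g|S=1,𝓗)` and the
covariance is unconditional. -/
theorem transport_term_for_theta
    {Ω : Type*} [mΩ : MeasurableSpace Ω] [StandardBorelSpace Ω] [Nonempty Ω]
    (μ : Measure Ω) [IsProbabilityMeasure μ]
    (gmax : ℕ)
    (S A G : Ω → ℕ)
    (hS : ∀ ω, S ω = 1 ∨ S ω = 2) (hSmeas : Measurable S)
    (hSpos : ∀ s, (s = 1 ∨ s = 2) → 0 < μ {ω | S ω = s})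
    (hA : ∀ ω, A ω ≤ 1) (hG : ∀ ω, G ω ≤ gmax)
    (hAmeas : Measurable A) (hGmeas : Measurable G)
    (Ypo : ℕ → ℕ → Ω → ℝ)
    (hYpomeas : ∀ a ≤ 1, ∀ g ≤ gmax, Measurable (Ypo a g))
    (hYposq : ∀ a ≤ 1, ∀ g ≤ gmax, MemLp (Ypo a g) 2 μ)
    (Ya : ℕ → Ω → ℝ)
    (hYa : ∀ a ω, Ya a ω = ∑ g ∈ Finset.range (gmax + 1), ind {ω' | G ω' = g} ω * Ypo a g ω)
    (Y : Ω → ℝ)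
    (hY : ∀ ω, Y ω = ind {ω' | A ω' = 1} ω * Ya 1 ω + ind {ω' | A ω' = 0} ω * Ya 0 ω)
    (mH : MeasurableSpace Ω) (hH : mH ≤ mΩ)
    (pg : ℕ → ℕ → Ω → ℝ)
    (hpg : ∀ s g, pg s g = (μ[|{ω | S ω = s}])[ind {ω | G ω = g} | mH])
    (hpgbdd : ∀ s g, ∀ᵐ ω ∂μ, 0 ≤ pg s g ω ∧ pg s g ω ≤ 1)
    (hpgmeas : ∀ s g, Measurable[mH] (pg s g))
    (htrans : ∀ a ≤ 1, ∀ g ≤ gmax,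
      CondIndepFun mH hH (Ypo a g) (fun ω => (S ω, G ω)) μ)
    (hSH : Indep (MeasurableSpace.comap S inferInstance) mH μ)
    (θ : ℝ)
    (hθ : θ = ∑ g ∈ Finset.range (gmax + 1),
        ((μ[|{ω | S ω = 1}]) {ω | G ω = g}).toReal
          * ∫ ω, (Ypo 1 g ω - Ypo 0 g ω) ∂(μ[|{ω | S ω = 1}])) :
    (∫ ω, (Ya 1 ω - Ya 0 ω) ∂(μ[|{ω | S ω = 1}])) - θ
      = ∑ g ∈ Finset.range (gmax + 1),
          cov μ (fun ω => Ypo 1 g ω - Ypo 0 g ω) (pg 1 g) :=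
  transport_term_for_theta_general (mΩ := mΩ) μ gmax S G hSmeas hSpos hGmeas Ypo hYpomeas hYposq Ya
    hYa mH hH pg hpg htrans hSH θ hθ
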